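/- The Fourier transform on the basic space commutes strictly with the embeddings: for every u ∈ 𝓢' one has 𝓕(ι(u)) = ι(𝓕'(u)) as maps L(𝓢',𝓢) → 𝓢, and for every f ∈ 𝓢 one has 𝓕(σ(f)) = σ(𝓕(f)). Moreover the two Fourier transforms are compatible with the embedding j, i.e. 𝓕'(j(f)) = j(𝓕(f)) for every f ∈ 𝓢, so on embedded Schwartz functions ι∘j and σ are transformed consistently. -/

import Mathlib

open MeasureTheory SchwartzMap Filter Topology Bornology Complex

noncomputable section

/-- The Schwartz space `𝓢(ℝⁿ, ℂ)`. -/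
abbrev Sch (n : ℕ) := SchwartzMap (EuclideanSpace ℝ (Fin n)) ℂ

/-- The space `𝓢'` of tempered distributions, i.e. the continuous linear functionals on `𝓢`,
endowed (by Mathlib's default instance) with the strong topology of uniform convergence on
bounded subsets of `𝓢`. -/
abbrev SchDual (n : ℕ) := Sch n →L[ℂ] ℂ

/-- The canonical embedding `j : 𝓢 → 𝓢'`, `j(f)(g) = ∫ f(x) g(x) dx`. -/
def jEmb {n : ℕ} (f : Sch n) : SchDual n := by
  refine SchwartzMap.mkCLMtoNormedSpace (fun g : Sch n => ∫ x, f x * g x) ?_ ?_ ?_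
  · intro g h
    have hg : Integrable (fun x => f x * g x) volume :=
      g.integrable.bdd_mul f.continuous.aestronglyMeasurable
        (c := SchwartzMap.seminorm ℂ 0 0 f) (ae_of_all _ fun x => f.norm_le_seminorm ℂ x)
    have hh : Integrable (fun x => f x * h x) volume :=
      h.integrable.bdd_mul f.continuous.aestronglyMeasurable
        (c := SchwartzMap.seminorm ℂ 0 0 f) (ae_of_all _ fun x => f.norm_le_seminorm ℂ x)
    simp only [SchwartzMap.add_apply, mul_add]
    exact integral_add hg hh
  · intro a g
    simp only [SchwartzMap.smul_apply, smul_eq_mul, RingHom.id_apply]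
    rw [← integral_const_mul]
    congr 1; funext x; ring
  · refine ⟨{(0, 0)}, ∫ x, ‖f x‖, integral_nonneg (fun x => norm_nonneg _), fun g => ?_⟩
    refine (norm_integral_le_integral_norm _).trans ?_
    have : ∀ x, ‖f x * g x‖ ≤ ‖f x‖ * (SchwartzMap.seminorm ℂ 0 0) g := by
      intro x
      rw [norm_mul]
      exact mul_le_mul_of_nonneg_left (g.norm_le_seminorm ℂ x) (norm_nonneg _)
    refine (integral_mono_of_nonneg (Eventually.of_forall fun x => norm_nonneg _)
      (f.integrable.norm.mul_const _) (Eventually.of_forall this)).trans ?_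
    rw [integral_mul_const]
    simp [schwartzSeminormFamily]

/-- The filter describing `ε → 0` with `ε ∈ (0,1]`. -/
def zeroFilter : Filter ℝ := nhdsWithin 0 (Set.Ioc 0 1)

/-- A *test object* for `(𝓢', 𝓢)`: a net `(Φ_ε)` of continuous linear maps `𝓢' → 𝓢` such that
(ii) `j ∘ Φ_ε → id` in `L_b(𝓢',𝓢')`, (iii) `sup_{f ∈ B} q(Φ_ε (j f) - f) = O(ε^m)` for every
`m ∈ ℕ`, every bounded `B ⊆ 𝓢` and every seminorm `q` of `𝓢`, and (iv) for every bounded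
`B' ⊆ 𝓢'` and every seminorm `q` of `𝓢` there is `N` with `sup_{u ∈ B'} q(Φ_ε u) = O(ε^{-N})`.
(The strong topology of `L_b(𝓢',𝓢')`, resp. its seminorms, are spelled out via uniform
convergence on bounded sets, the seminorms of `𝓢'` being suprema over bounded subsets of `𝓢`.) -/
structure IsTestObject {n : ℕ} (Φ : ℝ → (SchDual n →L[ℂ] Sch n)) : Prop where
  tendsto_id : ∀ B' : Set (SchDual n), IsVonNBounded ℂ B' →
    ∀ B : Set (Sch n), IsVonNBounded ℂ B → ∀ δ > (0:ℝ), ∀ᶠ ε in zeroFilter,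
      ∀ u ∈ B', ∀ g ∈ B, ‖jEmb (Φ ε u) g - u g‖ < δ
  negligible_on_Sch : ∀ m : ℕ, ∀ B : Set (Sch n), IsVonNBounded ℂ B → ∀ k l : ℕ,
    ∃ C : ℝ, ∀ᶠ ε in zeroFilter, ∀ f ∈ B,
      SchwartzMap.seminorm ℂ k l (Φ ε (jEmb f) - f) ≤ C * ε ^ m
  moderate : ∀ B' : Set (SchDual n), IsVonNBounded ℂ B' → ∀ k l : ℕ,
    ∃ N : ℕ, ∃ C : ℝ, ∀ᶠ ε in zeroFilter, ∀ u ∈ B',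
      SchwartzMap.seminorm ℂ k l (Φ ε u) ≤ C / ε ^ N

/-- A *0-test object* for `(𝓢', 𝓢)`: as `IsTestObject`, but with `j ∘ Φ_ε → 0` in
`L_b(𝓢',𝓢')` in (ii') and `sup_{f ∈ B} q(Φ_ε (j f)) = O(ε^m)` in (iii'). -/
structure IsZeroTestObject {n : ℕ} (Φ : ℝ → (SchDual n →L[ℂ] Sch n)) : Prop where
  tendsto_zero : ∀ B' : Set (SchDual n), IsVonNBounded ℂ B' →
    ∀ B : Set (Sch n), IsVonNBounded ℂ B → ∀ δ > (0:ℝ), ∀ᶠ ε in zeroFilter,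
      ∀ u ∈ B', ∀ g ∈ B, ‖jEmb (Φ ε u) g‖ < δ
  negligible_on_Sch : ∀ m : ℕ, ∀ B : Set (Sch n), IsVonNBounded ℂ B → ∀ k l : ℕ,
    ∃ C : ℝ, ∀ᶠ ε in zeroFilter, ∀ f ∈ B,
      SchwartzMap.seminorm ℂ k l (Φ ε (jEmb f)) ≤ C * ε ^ m
  moderate : ∀ B' : Set (SchDual n), IsVonNBounded ℂ B' → ∀ k l : ℕ,
    ∃ N : ℕ, ∃ C : ℝ, ∀ᶠ ε in zeroFilter, ∀ u ∈ B',
      SchwartzMap.seminorm ℂ k l (Φ ε u) ≤ C / ε ^ N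

/-- The Fourier transform `𝓕 : 𝓢 → 𝓢` (with kernel `e^{-2πi⟨x,ξ⟩}`) as a linear topological
isomorphism of the Schwartz space. -/
def fourierCLE (n : ℕ) : Sch n ≃L[ℂ] Sch n := FourierTransform.fourierCLE ℂ (Sch n)

/-- The Fourier transform on tempered distributions, `𝓕'(u) = u ∘ 𝓕`. -/
def fourierDual {n : ℕ} (u : SchDual n) : SchDual n :=
  u.comp (fourierCLE n).toContinuousLinearMap

/-- `𝓕'` as a continuous linear map `𝓢' →L 𝓢'`. -/
def fourierDualCLM (n : ℕ) : SchDual n →L[ℂ] SchDual n :=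
  ContinuousLinearMap.precomp ℂ (fourierCLE n).toContinuousLinearMap

/-- `(𝓕')⁻¹`, i.e. `u ↦ u ∘ 𝓕⁻¹`, as a continuous linear map `𝓢' →L 𝓢'`. -/
def fourierDualInvCLM (n : ℕ) : SchDual n →L[ℂ] SchDual n :=
  ContinuousLinearMap.precomp ℂ (fourierCLE n).symm.toContinuousLinearMap

/-- The conjugation `Φ ↦ 𝓕⁻¹ ∘ Φ ∘ 𝓕'` of a smoothing operator. -/
def ftConj {n : ℕ} (Φ : SchDual n →L[ℂ] Sch n) : SchDual n →L[ℂ] Sch n :=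
  ((fourierCLE n).symm.toContinuousLinearMap).comp (Φ.comp (fourierDualCLM n))

/-- The conjugation `Φ ↦ 𝓕 ∘ Φ ∘ (𝓕')⁻¹` of a smoothing operator. -/
def ftConjInv {n : ℕ} (Φ : SchDual n →L[ℂ] Sch n) : SchDual n →L[ℂ] Sch n :=
  ((fourierCLE n).toContinuousLinearMap).comp (Φ.comp (fourierDualInvCLM n))

/-- The Fourier transform on the basic space: `(𝓕R)(Φ) = 𝓕(R(𝓕⁻¹ ∘ Φ ∘ 𝓕'))`. -/
def FTbasic {n : ℕ} (R : (SchDual n →L[ℂ] Sch n) → Sch n) :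
    (SchDual n →L[ℂ] Sch n) → Sch n :=
  fun Φ => fourierCLE n (R (ftConj Φ))

/-- The candidate inverse Fourier transform on the basic space,
`R ↦ (Φ ↦ 𝓕⁻¹(R(𝓕 ∘ Φ ∘ (𝓕')⁻¹)))`. -/
def FTbasicInv {n : ℕ} (R : (SchDual n →L[ℂ] Sch n) → Sch n) :
    (SchDual n →L[ℂ] Sch n) → Sch n :=
  fun Φ => (fourierCLE n).symm (R (ftConjInv Φ))

/-- The Fourier transform on the basic space commutes strictly with the embeddings: for every
`u ∈ 𝓢'` one has `𝓕(ι u) = ι(𝓕' u)` as maps `L(𝓢',𝓢) → 𝓢`, and for every `f ∈ 𝓢` one has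
`𝓕(σ f) = σ(𝓕 f)`. Moreover `𝓕'(j f) = j(𝓕 f)` for every `f ∈ 𝓢`, so on embedded Schwartz
functions `ι ∘ j` and `σ` are transformed consistently. -/
theorem fourier_commutes_with_embeddings (n : ℕ) (hn : 0 < n) :
    (∀ u : SchDual n,
      FTbasic (fun Φ : SchDual n →L[ℂ] Sch n => Φ u) =
        fun Φ : SchDual n →L[ℂ] Sch n => Φ (fourierDual u)) ∧
    (∀ f : Sch n,
      FTbasic (fun _ : SchDual n →L[ℂ] Sch n => f) =
        fun _ : SchDual n →L[ℂ] Sch n => fourierCLE n f) ∧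
    (∀ f : Sch n, fourierDual (jEmb f) = jEmb (fourierCLE n f)) := by
  refine ⟨?_, ?_, ?_⟩
  · intro u
    funext Φ
    simp only [FTbasic, ftConj, fourierDualCLM, fourierDual, ContinuousLinearMap.comp_apply,
      ContinuousLinearEquiv.coe_coe, ContinuousLinearMap.precomp_apply]
    exact (fourierCLE n).apply_symm_apply _
  · intro f
    funext Φ
    rfl
  · intro f
    ext g
    have h := VectorFourier.integral_fourierIntegral_smul_eq_flip
      (e := Real.fourierChar) (L := innerₗ (EuclideanSpace ℝ (Fin n)))
      (μ := volume) (ν := volume)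
      Real.continuous_fourierChar (by exact continuous_inner)
      f.integrable g.integrable
    have hflip : (innerₗ (EuclideanSpace ℝ (Fin n))).flip = innerₗ _ := by
      ext x y; exact real_inner_comm x y
    rw [hflip] at h
    have key : ∫ x, (FourierTransform.fourier (f : EuclideanSpace ℝ (Fin n) → ℂ) x) * g x = ∫ x, f x * FourierTransform.fourier (g : EuclideanSpace ℝ (Fin n) → ℂ) x := by
      simp only [smul_eq_mul] at h; exact h
    show (jEmb f) ((fourierCLE n) g) = jEmb ((fourierCLE n) f) g
    have e1 : (jEmb f) ((fourierCLE n) g) = ∫ x, f x * ((fourierCLE n) g) x := rfl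
    have e2 : jEmb ((fourierCLE n) f) g = ∫ x, ((fourierCLE n) f) x * g x := rfl
    rw [e1, e2]
    have hg : ∀ x, ((fourierCLE n) g) x = FourierTransform.fourier (g : EuclideanSpace ℝ (Fin n) → ℂ) x := by
      intro x; simp [fourierCLE, SchwartzMap.fourier_coe]
    have hf : ∀ x, ((fourierCLE n) f) x = FourierTransform.fourier (f : EuclideanSpace ℝ (Fin n) → ℂ) x := by
      intro x; simp [fourierCLE, SchwartzMap.fourier_coe]
    simp only [hg, hf]
    exact key.symm

end
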